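/- arXiv:1711.07296 — 5 statements merged into one kernel-verified Lean document; each statement's English description precedes it below -/
import Mathlib

section
/- A homogeneous polynomial f ∈ ℂ[z₁,…,zₙ] is K-stable if and only if f is hyperbolic with respect to every point in the interior of K. -/
def KStable {n : ℕ} (K : Set (Fin n → ℝ)) (f : MvPolynomial (Fin n) ℂ) : Prop :=
  ∀ z : Fin n → ℂ, (fun j => (z j).im) ∈ interior K → MvPolynomial.eval z f ≠ 0

def Hyperbolic {n : ℕ} (f : MvPolynomial (Fin n) ℂ) (e : Fin n → ℝ) : Prop :=
  MvPolynomial.eval (fun j => (e j : ℂ)) f ≠ 0 ∧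
    ∀ x : Fin n → ℝ, ∀ t : ℂ,
      MvPolynomial.eval (fun j => (x j : ℂ) + t * (e j : ℂ)) f = 0 → t.im = 0

/-! If `e ∈ int K` and `Im t > 0`, then `Im (x + t e) = (Im t) e ∈ int K` because `K` is a cone,
so `K`-stability forbids `f (x + t e) = 0`. Homogeneity, through `f (-z) = (-1)^d f z` and
`f (i e) = i^d f e`, reduces `Im t < 0` and `f e = 0` to this case. Conversely, a zero `z = x + i y`
of `f` with `y ∈ int K` is the non-real root `t = i` of `t ↦ f (x + t y)`. -/

namespace MvPolynomial.IsHomogeneous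

theorem eval_smul {σ R : Type*} [CommSemiring R]
    {φ : MvPolynomial σ R} {m : ℕ} (hφ : φ.IsHomogeneous m) (c : R) (z : σ → R) :
    eval (c • z) φ = c ^ m * eval z φ := by
  rw [eval_eq, eval_eq, Finset.mul_sum]
  refine Finset.sum_congr rfl fun u hu => ?_
  have hdeg : ∑ i ∈ u.support, u i = m := by
    simpa [Finsupp.weight_apply, Finsupp.sum] using hφ (mem_support_iff.mp hu)
  simp only [Pi.smul_apply, smul_eq_mul, mul_pow, Finset.prod_mul_distrib,
    Finset.prod_pow_eq_pow_sum, hdeg]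
  ring

end MvPolynomial.IsHomogeneous

open scoped Pointwise in
theorem smul_mem_interior_of_forall_smul_mem {E : Type*} [AddCommGroup E] [Module ℝ E]
    [TopologicalSpace E] [ContinuousConstSMul ℝ E] {K : Set E}
    (hK : ∀ c : ℝ, 0 ≤ c → ∀ x ∈ K, c • x ∈ K) {c : ℝ} (hc : 0 < c) {e : E}
    (he : e ∈ interior K) : c • e ∈ interior K := by
  have hsub : c • interior K ⊆ interior K := by
    rw [← interior_smul₀ hc.ne']
    exact interior_mono (by rintro _ ⟨x, hx, rfl⟩; exact hK c hc.le x hx)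
  exact hsub (Set.smul_mem_smul_set he)

section KStable

open MvPolynomial

variable {n : ℕ} {K : Set (Fin n → ℝ)} {f : MvPolynomial (Fin n) ℂ}

theorem KStable.eval_add_mul_ne_zero (hS : KStable K f)
    (hK : ∀ c : ℝ, 0 ≤ c → ∀ x ∈ K, c • x ∈ K) {e : Fin n → ℝ} (he : e ∈ interior K)
    (x : Fin n → ℝ) {t : ℂ} (ht : 0 < t.im) :
    eval (fun j => (x j : ℂ) + t * (e j : ℂ)) f ≠ 0 := by
  refine hS _ ?_
  have him : (fun j => ((x j : ℂ) + t * (e j : ℂ)).im) = t.im • e := by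
    funext j
    simp
  rw [him]
  exact smul_mem_interior_of_forall_smul_mem hK ht he

theorem KStable.hyperbolic {d : ℕ} (hf : f.IsHomogeneous d) (hS : KStable K f)
    (hK : ∀ c : ℝ, 0 ≤ c → ∀ x ∈ K, c • x ∈ K) {e : Fin n → ℝ} (he : e ∈ interior K) :
    Hyperbolic f e := by
  refine ⟨fun h0 => ?_, fun x t hzero => ?_⟩
  · refine hS.eval_add_mul_ne_zero hK he 0 (t := Complex.I) (by simp) ?_
    have hIe : (fun j => ((0 : Fin n → ℝ) j : ℂ) + Complex.I * (e j : ℂ)) =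
        Complex.I • fun j => (e j : ℂ) := by
      funext j
      simp
    rw [hIe, hf.eval_smul, h0, mul_zero]
  · by_contra hne
    rcases lt_or_gt_of_ne hne with hneg | hpos
    · refine hS.eval_add_mul_ne_zero hK he (-x) (t := -t) (by simpa using hneg) ?_
      have hflip : (fun j => ((-x) j : ℂ) + -t * (e j : ℂ)) =
          (-1 : ℂ) • fun j => (x j : ℂ) + t * (e j : ℂ) := by
        funext j
        simp only [Pi.neg_apply, Complex.ofReal_neg, Pi.smul_apply, smul_eq_mul]
        ring
      rw [hflip, hf.eval_smul, hzero, mul_zero]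
    · exact hS.eval_add_mul_ne_zero hK he x hpos hzero

theorem kStable_of_forall_hyperbolic (hH : ∀ e ∈ interior K, Hyperbolic f e) : KStable K f := by
  intro z hz hzero
  have hz_eq : (fun j => ((z j).re : ℂ) + Complex.I * ((z j).im : ℂ)) = z := by
    funext j
    rw [mul_comm, Complex.re_add_im]
  have him := (hH _ hz).2 (fun j => (z j).re) Complex.I (by rw [hz_eq]; exact hzero)
  simp at him

end KStable

theorem stmt1_general {n : ℕ} (K : Set (Fin n → ℝ))
    (hKcone : ∀ (c : ℝ), 0 ≤ c → ∀ x ∈ K, c • x ∈ K)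
    (f : MvPolynomial (Fin n) ℂ) (d : ℕ) (hf : f.IsHomogeneous d) :
    KStable K f ↔ ∀ e ∈ interior K, Hyperbolic f e :=
  ⟨fun hS _ he => hS.hyperbolic hf hKcone he, kStable_of_forall_hyperbolic⟩

/-- A homogeneous polynomial is `K`-stable iff it is hyperbolic with respect to every point
in the interior of `K`. -/
theorem stmt1 {n : ℕ} (K : Set (Fin n → ℝ))
    (hKcl : IsClosed K) (hKconv : Convex ℝ K)
    (hKcone : ∀ (c : ℝ), 0 ≤ c → ∀ x ∈ K, c • x ∈ K)
    (hKpointed : K ∩ (-K) ⊆ {0}) (hKfull : (interior K).Nonempty)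
    (f : MvPolynomial (Fin n) ℂ) (d : ℕ) (hf : f.IsHomogeneous d) :
    KStable K f ↔ ∀ e ∈ interior K, Hyperbolic f e :=
  stmt1_general K hKcone f d hf
end

section
/- Let f, g ∈ ℝ[z₁,…,zₙ] and K ⊂ ℝⁿ be a proper cone. Then g + i·f is K-stable if and only if the polynomial g + w·f ∈ ℝ[z₁,…,zₙ, w] is (K × ℝ≥0)-stable. -/
/-!
Fix `z` with `Im z ∈ int K` and write `G = g(z)`, `F = f(z)`. Since `K` is a cone, the
one-variable polynomial `q(t) = (g + i f)(Re z + t Im z)` has no zeros in the upper half-plane,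
so every root `a` of `q` has `Im a ≤ 0` and is at least as close to `-i` as to `i`; hence
`|q(-i)| ≤ |q(i)|`. As `f, g` are real, `q(i) = G + iF` and `q(-i) = conj (G - iF)`, so
`|G - iF| ≤ |G + iF|`, i.e. `Im (G conj F) ≥ 0`, which rules out `G = -wF` with `Im w > 0`.
The converse is the specialisation `w = i`.
-/

open MvPolynomial

open ComplexConjugate

namespace Complex

lemma norm_conj_sub_le_norm_sub {t a : ℂ} (ht : 0 ≤ t.im) (ha : a.im ≤ 0) :
    ‖conj t - a‖ ≤ ‖t - a‖ := by
  rw [norm_def, norm_def]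
  gcongr
  simp only [normSq_apply, sub_re, sub_im, conj_re, conj_im]
  nlinarith

lemma add_mul_ne_zero_of_norm_sub_I_mul_le {G F w : ℂ}
    (hle : ‖G - I * F‖ ≤ ‖G + I * F‖) (hne : G + I * F ≠ 0) (hw : 0 < w.im) :
    G + w * F ≠ 0 := by
  intro hzero
  obtain rfl : G = -(w * F) := eq_neg_of_add_eq_zero_left hzero
  have hF : F ≠ 0 := by rintro rfl; simp at hne
  have hw_I : ‖w + I‖ ≤ ‖w - I‖ := by
    rw [show -(w * F) - I * F = -((w + I) * F) by ring,
      show -(w * F) + I * F = -((w - I) * F) by ring, norm_neg, norm_neg, norm_mul,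
      norm_mul] at hle
    exact le_of_mul_le_mul_right hle (norm_pos_iff.2 hF)
  have hsq := pow_le_pow_left₀ (norm_nonneg _) hw_I 2
  simp only [Complex.sq_norm, normSq_apply, add_re, add_im, sub_re, sub_im, I_re, I_im] at hsq
  -- `‖w + I‖ ^ 2 - ‖w - I‖ ^ 2 = 4 * w.im`
  nlinarith

end Complex

lemma Polynomial.norm_eval_conj_le_norm_eval {p : Polynomial ℂ}
    (hp : ∀ t : ℂ, 0 < t.im → p.eval t ≠ 0) {t : ℂ} (ht : 0 ≤ t.im) :
    ‖p.eval (conj t)‖ ≤ ‖p.eval t‖ := by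
  have hroots : ∀ a ∈ p.roots, a.im ≤ 0 := fun a ha =>
    not_lt.1 fun h => hp a h (isRoot_of_mem_roots ha)
  have hnorm_prod (s : Multiset ℂ) : ‖s.prod‖ = (s.map (‖·‖)).prod :=
    map_multiset_prod (normHom : ℂ →*₀ ℝ) s
  simp only [(IsAlgClosed.splits p).eval_eq_prod_roots, norm_mul, hnorm_prod, Multiset.map_map]
  gcongr
  exact Multiset.prod_map_le_prod_map₀ _ _ (fun _ _ => norm_nonneg _)
    fun a ha => Complex.norm_conj_sub_le_norm_sub ht (hroots a ha)

namespace MvPolynomial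

lemma exists_polynomial_eval_eq_eval_line {σ R : Type*} [CommSemiring R]
    (p : MvPolynomial σ R) (x y : σ → R) :
    ∃ q : Polynomial R, ∀ t, q.eval t = eval (fun i => x i + y i * t) p := by
  refine ⟨aeval (fun i => Polynomial.C (x i) + Polynomial.C (y i) * Polynomial.X) p,
    fun t => ?_⟩
  rw [aeval_def, ← Polynomial.coe_evalRingHom, eval₂_comp_left]
  congr 1
  · ext; simp
  · ext; simp

lemma eval_conj_map_ofReal {σ : Type*} (p : MvPolynomial σ ℝ) (z : σ → ℂ) :
    eval (fun i => conj (z i)) (p.map (algebraMap ℝ ℂ)) =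
      conj (eval z (p.map (algebraMap ℝ ℂ))) := by
  simp only [eval_map, eval₂_comp_left]
  congr 1
  ext r
  simp

lemma eval_map_rename_castSucc_add_X_last_mul {n : ℕ} (f g : MvPolynomial (Fin n) ℝ)
    (z : Fin (n + 1) → ℂ) :
    eval z ((rename Fin.castSucc g + X (Fin.last n) * rename Fin.castSucc f).map
        (algebraMap ℝ ℂ)) =
      eval (fun i => z i.castSucc) (g.map (algebraMap ℝ ℂ)) +
        z (Fin.last n) * eval (fun i => z i.castSucc) (f.map (algebraMap ℝ ℂ)) := by
  simp only [map_add, map_mul, map_X, map_rename, eval_X, eval_rename]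
  rfl

end MvPolynomial

lemma smul_mem_interior_of_pos_smul_mem {E : Type*} [TopologicalSpace E] [MulAction ℝ E]
    [ContinuousConstSMul ℝ E] {K : Set E} (hK : ∀ c : ℝ, 0 < c → ∀ x ∈ K, c • x ∈ K)
    {c : ℝ} (hc : 0 < c) {x : E} (hx : x ∈ interior K) : c • x ∈ interior K := by
  refine interior_mono (Set.smul_set_subset_iff.2 fun y hy => hK c hc y hy) ?_
  rw [interior_smul₀ hc.ne']
  exact Set.smul_mem_smul_set hx

lemma mem_interior_setOf_init_mem_and_last_nonneg {n : ℕ} {K : Set (Fin n → ℝ)}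
    {y : Fin (n + 1) → ℝ} :
    y ∈ interior
        {y : Fin (n + 1) → ℝ | (fun i : Fin n => y i.castSucc) ∈ K ∧ 0 ≤ y (Fin.last n)} ↔
      (fun i : Fin n => y i.castSucc) ∈ interior K ∧ 0 < y (Fin.last n) := by
  let e : (Fin (n + 1) → ℝ) ≃ₜ (Fin n → ℝ) × ℝ :=
    { toFun y := (fun i => y i.castSucc, y (Fin.last n))
      invFun p := Fin.snoc p.1 p.2
      left_inv := Fin.snoc_init_self
      right_inv p := by simp
      continuous_toFun := by fun_prop
      continuous_invFun := continuous_fst.finSnoc (A := fun _ => ℝ) continuous_snd }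
  have hS : {y : Fin (n + 1) → ℝ | (fun i : Fin n => y i.castSucc) ∈ K ∧ 0 ≤ y (Fin.last n)} =
      e ⁻¹' (K ×ˢ Set.Ici 0) := rfl
  rw [hS, ← e.preimage_interior, interior_prod_eq, interior_Ici]
  rfl

lemma eval_add_mul_eval_ne_zero_of_kStable {n : ℕ} {K : Set (Fin n → ℝ)}
    (hK : ∀ c : ℝ, 0 < c → ∀ x ∈ K, c • x ∈ K) {f g : MvPolynomial (Fin n) ℝ}
    (hs : KStable K (g.map (algebraMap ℝ ℂ) + C Complex.I * f.map (algebraMap ℝ ℂ)))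
    {z : Fin n → ℂ} (hz : (fun j => (z j).im) ∈ interior K) {w : ℂ} (hw : 0 < w.im) :
    eval z (g.map (algebraMap ℝ ℂ)) + w * eval z (f.map (algebraMap ℝ ℂ)) ≠ 0 := by
  set G := eval z (g.map (algebraMap ℝ ℂ))
  set F := eval z (f.map (algebraMap ℝ ℂ))
  obtain ⟨q, hq⟩ := exists_polynomial_eval_eq_eval_line
    (g.map (algebraMap ℝ ℂ) + C Complex.I * f.map (algebraMap ℝ ℂ))
    (fun j => ((z j).re : ℂ)) (fun j => ((z j).im : ℂ))
  have hq_ne : ∀ t : ℂ, 0 < t.im → q.eval t ≠ 0 := by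
    intro t ht
    rw [hq]
    refine hs _ ?_
    convert smul_mem_interior_of_pos_smul_mem hK ht hz using 1
    ext j
    simp [mul_comm]
  have hq_I : q.eval Complex.I = G + Complex.I * F := by
    simp [hq, G, F]
  have hq_conj_I : q.eval (conj Complex.I) = conj (G - Complex.I * F) := by
    have hconj :
        (fun j => ((z j).re : ℂ) + (z j).im * conj Complex.I) = fun j => conj (z j) := by
      ext j
      apply Complex.ext <;> simp
    rw [hq, hconj]
    simp only [map_add, map_mul, eval_C, eval_conj_map_ofReal, map_sub, Complex.conj_I, G, F]
    ring
  refine Complex.add_mul_ne_zero_of_norm_sub_I_mul_le ?_ (hq_I ▸ hq_ne Complex.I (by simp)) hw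
  rw [← Complex.norm_conj (G - Complex.I * F), ← hq_conj_I, ← hq_I]
  exact Polynomial.norm_eval_conj_le_norm_eval hq_ne (by simp)

theorem stmt8_general {n : ℕ} (K : Set (Fin n → ℝ))
    (hKcone : ∀ (c : ℝ), 0 ≤ c → ∀ x ∈ K, c • x ∈ K)
    (f g : MvPolynomial (Fin n) ℝ) :
    KStable K (g.map (algebraMap ℝ ℂ) + C Complex.I * f.map (algebraMap ℝ ℂ)) ↔
      KStable {y : Fin (n + 1) → ℝ |
          (fun i : Fin n => y i.castSucc) ∈ K ∧ 0 ≤ y (Fin.last n)}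
        (((rename Fin.castSucc g + X (Fin.last n) * rename Fin.castSucc f) :
            MvPolynomial (Fin (n + 1)) ℝ).map (algebraMap ℝ ℂ)) := by
  constructor
  · intro hs z hz
    obtain ⟨hinit, hlast⟩ := mem_interior_setOf_init_mem_and_last_nonneg.1 hz
    rw [eval_map_rename_castSucc_add_X_last_mul]
    exact eval_add_mul_eval_ne_zero_of_kStable (fun c hc => hKcone c hc.le) hs hinit hlast
  · intro hs z hz
    let Z : Fin (n + 1) → ℂ := Fin.snoc z Complex.I
    have hZ := mem_interior_setOf_init_mem_and_last_nonneg (K := K) (y := fun j => (Z j).im)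
      |>.2 ⟨by simpa [Z] using hz, by simp [Z]⟩
    have hne := hs Z hZ
    rw [eval_map_rename_castSucc_add_X_last_mul] at hne
    simpa [Z] using hne

/-- `g + i f` is `K`-stable iff `g + w f` is `(K × ℝ≥0)`-stable. -/
theorem stmt8 {n : ℕ} (K : Set (Fin n → ℝ))
    (hKcl : IsClosed K) (hKconv : Convex ℝ K)
    (hKcone : ∀ (c : ℝ), 0 ≤ c → ∀ x ∈ K, c • x ∈ K)
    (hKpointed : K ∩ (-K) ⊆ {0}) (hKfull : (interior K).Nonempty)
    (f g : MvPolynomial (Fin n) ℝ) :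
    KStable K (g.map (algebraMap ℝ ℂ) + C Complex.I * f.map (algebraMap ℝ ℂ)) ↔
      KStable {y : Fin (n + 1) → ℝ |
          (fun i : Fin n => y i.castSucc) ∈ K ∧ 0 ≤ y (Fin.last n)}
        (((rename Fin.castSucc g + X (Fin.last n) * rename Fin.castSucc f) :
            MvPolynomial (Fin (n + 1)) ℝ).map (algebraMap ℝ ℂ)) :=
  stmt8_general K hKcone f g
end

section
/- (Conic Hermite–Kakeya–Obreschkoff) Let f, g ∈ ℝ[z₁,…,zₙ] and K ⊂ ℝⁿ a proper cone. Then λf + μg is K-stable or the zero polynomial for all λ, μ ∈ ℝ if and only if f + i·g is K-stable, or g + i·f is K-stable, or f ≡ g ≡ 0. -/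
/-!
Restricted to a line `t ↦ x + t y` with `y ∈ int K`, a `K`-stable `F` is a univariate polynomial
without zeros in the upper half-plane; comparing its root factors at `i` and `-i` gives
`|F(z̄)| ≤ |F(z)|` on the tube `ℝⁿ + i·int K`. For real `f, g` and `F = f + i g`, the polynomial
`G = f - i g` satisfies `G(z) = conj (F(z̄))`, so `|G / F| ≤ 1` on the tube. If
`2 (λ f + μ g) = (λ - iμ) F + (λ + iμ) G` vanished at a point of the tube, `|G / F|` would equal `1`
there, hence `G / F` would be constant by the maximum modulus principle, and `λ f + μ g` would
vanish on the whole (open) tube.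

Conversely, if every nonzero member of the pencil is stable, then `g` is stable (or zero), and
`Im (f / g)` cannot vanish anywhere on the tube unless `f` is a real multiple of `g`; by
connectedness it has a constant sign, which rules out `f / g = -i` or `f / g = i`.
-/

open MvPolynomial

section

open Complex ComplexConjugate Pointwise

theorem Complex.norm_conj_sub_le_norm_sub_s10 {t r : ℂ} (ht : 0 ≤ t.im) (hr : r.im ≤ 0) :
    ‖conj t - r‖ ≤ ‖t - r‖ := by
  rw [← sq_le_sq₀ (norm_nonneg _) (norm_nonneg _), Complex.sq_norm, Complex.sq_norm,
    normSq_apply, normSq_apply]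
  simp only [sub_re, sub_im, conj_re, conj_im]
  nlinarith

theorem Polynomial.norm_eval_conj_le_norm_eval_s10 {P : Polynomial ℂ} (hP : ∀ r ∈ P.roots, r.im ≤ 0)
    {t : ℂ} (ht : 0 ≤ t.im) : ‖P.eval (conj t)‖ ≤ ‖P.eval t‖ := by
  have hnorm (s : Multiset ℂ) : ‖s.prod‖ = (s.map (‖·‖)).prod := map_multiset_prod normHom s
  simp only [(IsAlgClosed.splits P).eval_eq_prod_roots, norm_mul, hnorm, Multiset.map_map]
  gcongr
  exact Multiset.prod_map_le_prod_map₀ _ _ (fun _ _ => norm_nonneg _)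
    fun r hr => norm_conj_sub_le_norm_sub_s10 ht (hP r hr)

theorem MvPolynomial.eval_aeval_C_add_C_mul_X {σ : Type*} (x y : σ → ℂ) (F : MvPolynomial σ ℂ)
    (t : ℂ) :
    (aeval (fun j => Polynomial.C (x j) + Polynomial.C (y j) * Polynomial.X) F).eval t =
      eval (fun j => x j + y j * t) F := by
  have hC : (Polynomial.evalRingHom t).comp Polynomial.C = RingHom.id ℂ :=
    RingHom.ext fun _ => Polynomial.eval_C
  simp only [aeval_def, polynomial_eval_eval₂, Polynomial.algebraMap_eq, hC, Polynomial.eval_add,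
    Polynomial.eval_C, Polynomial.eval_mul, Polynomial.eval_X]
  rfl

theorem MvPolynomial.eval_conj_map_algebraMap {σ : Type*} (f : MvPolynomial σ ℝ) (z : σ → ℂ) :
    eval (fun j => conj (z j)) (f.map (algebraMap ℝ ℂ)) =
      conj (eval z (f.map (algebraMap ℝ ℂ))) := by
  induction f using MvPolynomial.induction_on <;> simp_all

theorem MvPolynomial.eval_map_smul_add_smul {σ : Type*} (f g : MvPolynomial σ ℝ) (lam mu : ℝ)
    (z : σ → ℂ) :
    eval z ((lam • f + mu • g).map (algebraMap ℝ ℂ)) =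
      lam * eval z (f.map (algebraMap ℝ ℂ)) + mu * eval z (g.map (algebraMap ℝ ℂ)) := by
  simp [smul_eq_C_mul]

theorem MvPolynomial.eq_zero_of_eqOn_zero_of_isOpen {σ : Type*} [Fintype σ] {p : MvPolynomial σ ℂ}
    {U : Set (σ → ℂ)} (hU : IsOpen U) {z₀ : σ → ℂ} (hz₀ : z₀ ∈ U)
    (hp : ∀ z ∈ U, eval z p = 0) : p = 0 := by
  have hzero := (AnalyticOnNhd.eval_mvPolynomial p).eqOn_zero_of_preconnected_of_eventuallyEq_zero
    isPreconnected_univ (Set.mem_univ z₀) (Filter.eventuallyEq_of_mem (hU.mem_nhds hz₀) hp)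
  exact MvPolynomial.funext fun z => by simpa using hzero (Set.mem_univ z)

theorem eqOn_mul_of_norm_le_of_norm_eq {E : Type*} [NormedAddCommGroup E] [NormedSpace ℂ E]
    {F G : E → ℂ} {U : Set E} (hU : IsPreconnected U) (hUo : IsOpen U)
    (hF : DifferentiableOn ℂ F U) (hG : DifferentiableOn ℂ G U) (hF0 : ∀ z ∈ U, F z ≠ 0)
    (hle : ∀ z ∈ U, ‖G z‖ ≤ ‖F z‖) {z₀ : E} (hz₀ : z₀ ∈ U) (heq : ‖G z₀‖ = ‖F z₀‖) :
    ∀ z ∈ U, G z * F z₀ = G z₀ * F z := by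
  have hmax : IsMaxOn (norm ∘ fun z => G z * (F z)⁻¹) U z₀ := fun z hz => by
    show ‖G z * (F z)⁻¹‖ ≤ ‖G z₀ * (F z₀)⁻¹‖
    rw [← div_eq_mul_inv, ← div_eq_mul_inv, norm_div, norm_div, heq,
      div_self (norm_ne_zero_iff.2 (hF0 z₀ hz₀))]
    exact div_le_one_of_le₀ (hle z hz) (norm_nonneg _)
  intro z hz
  have hconst : G z * (F z)⁻¹ = G z₀ * (F z₀)⁻¹ :=
    Complex.eqOn_of_isPreconnected_of_isMaxOn_norm hU hUo (hG.fun_mul (hF.fun_inv hF0)) hz₀ hmax hz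
  field_simp [hF0 z hz, hF0 z₀ hz₀] at hconst
  linear_combination hconst

theorem smul_mem_interior_of_cone {E : Type*} [TopologicalSpace E] [AddCommGroup E] [Module ℝ E]
    [ContinuousConstSMul ℝ E] {K : Set E} (hK : ∀ c : ℝ, 0 ≤ c → ∀ x ∈ K, c • x ∈ K) {c : ℝ}
    (hc : 0 < c) {y : E} (hy : y ∈ interior K) : c • y ∈ interior K := by
  have hsub : c • K ⊆ K := by
    rintro _ ⟨x, hx, rfl⟩
    exact hK c hc.le x hx
  exact interior_mono hsub (by rw [interior_smul₀ hc.ne']; exact Set.smul_mem_smul_set hy)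

def tubeDomain {σ : Type*} (Ω : Set (σ → ℝ)) : Set (σ → ℂ) :=
  {z | (fun j => (z j).im) ∈ Ω}

section Tube

variable {σ : Type*} {Ω : Set (σ → ℝ)}

theorem isOpen_tubeDomain (hΩ : IsOpen Ω) : IsOpen (tubeDomain Ω) :=
  hΩ.preimage (continuous_pi fun j => continuous_im.comp (continuous_apply j))

theorem convex_tubeDomain (hΩ : Convex ℝ Ω) : Convex ℝ (tubeDomain Ω) :=
  hΩ.linear_preimage (LinearMap.pi fun j => imLm.comp (LinearMap.proj j))

theorem MvPolynomial.norm_eval_conj_le_of_ne_zero_on_tubeDomain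
    (hΩ : ∀ c : ℝ, 0 < c → ∀ y ∈ Ω, c • y ∈ Ω) {F : MvPolynomial σ ℂ}
    (hF : ∀ z ∈ tubeDomain Ω, eval z F ≠ 0) {z : σ → ℂ} (hz : z ∈ tubeDomain Ω) :
    ‖eval (fun j => conj (z j)) F‖ ≤ ‖eval z F‖ := by
  set P :=
    aeval (fun j => Polynomial.C ((z j).re : ℂ) + Polynomial.C ((z j).im : ℂ) * Polynomial.X) F
  have hroots : ∀ r ∈ P.roots, r.im ≤ 0 := by
    intro r hr
    by_contra! hr_im
    refine hF _ ?_ (by rw [← eval_aeval_C_add_C_mul_X]; exact (Polynomial.mem_roots'.1 hr).2)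
    show (fun j => _) ∈ Ω
    convert hΩ r.im hr_im _ hz using 1
    funext j
    simp [mul_comm]
  have key := Polynomial.norm_eval_conj_le_norm_eval_s10 hroots (t := I) (by simp)
  have hz_line : (fun j => ((z j).re : ℂ) + (z j).im * I) = z :=
    _root_.funext fun j => re_add_im (z j)
  have hconj_line : (fun j => ((z j).re : ℂ) + (z j).im * conj I) = fun j => conj (z j) :=
    _root_.funext fun j => by apply Complex.ext <;> simp
  rwa [eval_aeval_C_add_C_mul_X, eval_aeval_C_add_C_mul_X, hz_line, hconj_line] at key

theorem norm_eval_sub_I_mul_le_of_ne_zero_on_tubeDomain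
    (hΩ : ∀ c : ℝ, 0 < c → ∀ y ∈ Ω, c • y ∈ Ω) {f g : MvPolynomial σ ℝ}
    (hfg : ∀ z ∈ tubeDomain Ω,
      eval z (f.map (algebraMap ℝ ℂ) + C I * g.map (algebraMap ℝ ℂ)) ≠ 0)
    {z : σ → ℂ} (hz : z ∈ tubeDomain Ω) :
    ‖eval z (f.map (algebraMap ℝ ℂ) - C I * g.map (algebraMap ℝ ℂ))‖ ≤
      ‖eval z (f.map (algebraMap ℝ ℂ) + C I * g.map (algebraMap ℝ ℂ))‖ := by
  have hconj : eval z (f.map (algebraMap ℝ ℂ) - C I * g.map (algebraMap ℝ ℂ)) =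
      conj (eval (fun j => conj (z j))
        (f.map (algebraMap ℝ ℂ) + C I * g.map (algebraMap ℝ ℂ))) := by
    simp only [map_add, map_sub, map_mul, eval_C, eval_conj_map_algebraMap, conj_I, conj_conj]
    ring
  rw [hconj, norm_conj]
  exact norm_eval_conj_le_of_ne_zero_on_tubeDomain hΩ hfg hz

theorem eval_smul_add_smul_ne_zero_on_tubeDomain_or_eq_zero [Fintype σ]
    (hΩo : IsOpen Ω) (hΩc : Convex ℝ Ω) (hΩ : ∀ c : ℝ, 0 < c → ∀ y ∈ Ω, c • y ∈ Ω)
    {f g : MvPolynomial σ ℝ}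
    (hfg : ∀ z ∈ tubeDomain Ω,
      eval z (f.map (algebraMap ℝ ℂ) + C I * g.map (algebraMap ℝ ℂ)) ≠ 0)
    (lam mu : ℝ) :
    (∀ z ∈ tubeDomain Ω, eval z ((lam • f + mu • g).map (algebraMap ℝ ℂ)) ≠ 0) ∨
      lam • f + mu • g = 0 := by
  refine or_iff_not_imp_right.2 fun hpencil z₀ hz₀ h₀ => hpencil ?_
  set F := f.map (algebraMap ℝ ℂ) + C I * g.map (algebraMap ℝ ℂ)
  set G := f.map (algebraMap ℝ ℂ) - C I * g.map (algebraMap ℝ ℂ)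
  set c : ℂ := lam - I * mu
  have hcomb : ∀ z, c * eval z F + conj c * eval z G =
      2 * eval z ((lam • f + mu • g).map (algebraMap ℝ ℂ)) := fun z => by
    rw [eval_map_smul_add_smul]
    simp only [F, G, c, map_add, map_sub, map_mul, eval_C, conj_ofReal, conj_I]
    linear_combination (-2 * mu * eval z (g.map (algebraMap ℝ ℂ))) * I_sq
  have hc : c ≠ 0 := by
    intro hc
    apply hpencil
    have hlam : lam = 0 := by simpa [c] using congrArg re hc
    have hmu : mu = 0 := by simpa [c] using congrArg im hc
    simp [hlam, hmu]
  have hle : ∀ z ∈ tubeDomain Ω, ‖eval z G‖ ≤ ‖eval z F‖ := fun z hz =>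
    norm_eval_sub_I_mul_le_of_ne_zero_on_tubeDomain hΩ hfg hz
  have heq : ‖eval z₀ G‖ = ‖eval z₀ F‖ := by
    have h := hcomb z₀
    rw [h₀, mul_zero, add_eq_zero_iff_eq_neg] at h
    have := congrArg norm h
    rw [norm_mul, norm_neg, norm_mul, norm_conj] at this
    exact (mul_left_cancel₀ (norm_ne_zero_iff.2 hc) this).symm
  have hdiff (p : MvPolynomial σ ℂ) : DifferentiableOn ℂ (fun z => eval z p) (tubeDomain Ω) :=
    (AnalyticOnNhd.eval_mvPolynomial p).differentiableOn.mono (Set.subset_univ _)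
  have hprop := eqOn_mul_of_norm_le_of_norm_eq (convex_tubeDomain hΩc).isPreconnected
    (isOpen_tubeDomain hΩo) (hdiff F) (hdiff G) hfg hle hz₀ heq
  refine map_injective _ (algebraMap ℝ ℂ).injective ?_
  rw [map_zero]
  refine eq_zero_of_eqOn_zero_of_isOpen (isOpen_tubeDomain hΩo) hz₀ fun z hz => ?_
  have key : 2 * eval z ((lam • f + mu • g).map (algebraMap ℝ ℂ)) * eval z₀ F =
      eval z F * (2 * eval z₀ ((lam • f + mu • g).map (algebraMap ℝ ℂ))) := by
    rw [← hcomb z, ← hcomb z₀]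
    linear_combination conj c * hprop z hz
  rw [h₀, mul_zero, mul_zero, mul_eq_zero, mul_eq_zero] at key
  exact (key.resolve_right (hfg z₀ hz₀)).resolve_left two_ne_zero

end Tube

theorem im_div_nonneg_or_nonpos_of_pencil {σ : Type*} {T : Set (σ → ℂ)} (hT : IsPreconnected T)
    {f g : MvPolynomial σ ℝ} (hg : ∀ z ∈ T, eval z (g.map (algebraMap ℝ ℂ)) ≠ 0)
    (hpencil : ∀ lam mu : ℝ,
      (∀ z ∈ T, eval z ((lam • f + mu • g).map (algebraMap ℝ ℂ)) ≠ 0) ∨ lam • f + mu • g = 0) :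
    (∀ z ∈ T, 0 ≤ (eval z (f.map (algebraMap ℝ ℂ)) / eval z (g.map (algebraMap ℝ ℂ))).im) ∨
      ∀ z ∈ T, (eval z (f.map (algebraMap ℝ ℂ)) / eval z (g.map (algebraMap ℝ ℂ))).im ≤ 0 := by
  set w := fun z => eval z (f.map (algebraMap ℝ ℂ)) / eval z (g.map (algebraMap ℝ ℂ))
  have hreal : ∀ z ∈ T, (w z).im = 0 → ∀ z' ∈ T, (w z').im = 0 := by
    intro z hz h0 z' hz'
    set t := (w z).re
    have hwz : w z = t := Complex.ext rfl (by simp [h0])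
    rcases hpencil 1 (-t) with h | h
    · have hfz : eval z (f.map (algebraMap ℝ ℂ)) = t * eval z (g.map (algebraMap ℝ ℂ)) := by
        rw [← hwz]
        exact (div_mul_cancel₀ _ (hg z hz)).symm
      refine absurd ?_ (h z hz)
      rw [eval_map_smul_add_smul, hfz]
      push_cast
      ring
    · rw [one_smul, neg_smul, ← sub_eq_add_neg, sub_eq_zero] at h
      simp only [w, h, smul_eq_C_mul, map_mul, map_C, eval_C, mul_div_assoc, div_self (hg z' hz')]
      simp
  by_contra! ⟨⟨z₁, hz₁, h₁⟩, ⟨z₂, hz₂, h₂⟩⟩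
  have hcont : ContinuousOn (fun z => (w z).im) T :=
    continuous_im.comp_continuousOn
      ((continuous_eval _).continuousOn.div (continuous_eval _).continuousOn hg)
  obtain ⟨z, hz, h0⟩ := hT.intermediate_value hz₁ hz₂ hcont ⟨h₁.le, h₂.le⟩
  exact h₁.ne (hreal z hz h0 z₁ hz₁)

theorem eval_add_I_mul_ne_zero_on_or_of_pencil {σ : Type*} {T : Set (σ → ℂ)}
    (hT : IsPreconnected T) {f g : MvPolynomial σ ℝ}
    (hpencil : ∀ lam mu : ℝ,
      (∀ z ∈ T, eval z ((lam • f + mu • g).map (algebraMap ℝ ℂ)) ≠ 0) ∨ lam • f + mu • g = 0) :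
    (∀ z ∈ T, eval z (f.map (algebraMap ℝ ℂ) + C I * g.map (algebraMap ℝ ℂ)) ≠ 0) ∨
      (∀ z ∈ T, eval z (g.map (algebraMap ℝ ℂ) + C I * f.map (algebraMap ℝ ℂ)) ≠ 0) ∨
      (f = 0 ∧ g = 0) := by
  rcases hpencil 0 1 with hg | hg
  swap
  · simp only [zero_smul, one_smul, zero_add] at hg
    subst hg
    rcases hpencil 1 0 with hf | hf
    · left
      simpa using hf
    · right; right
      simpa using hf
  simp only [eval_map_smul_add_smul, ofReal_zero, ofReal_one, zero_mul, one_mul, zero_add] at hg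
  set w := fun z => eval z (f.map (algebraMap ℝ ℂ)) / eval z (g.map (algebraMap ℝ ℂ))
  have hw : ∀ z ∈ T, eval z (f.map (algebraMap ℝ ℂ)) = w z * eval z (g.map (algebraMap ℝ ℂ)) :=
    fun z hz => (div_mul_cancel₀ _ (hg z hz)).symm
  rcases im_div_nonneg_or_nonpos_of_pencil hT hg hpencil with h | h
  · left
    intro z hz h0
    simp only [map_add, map_mul, eval_C, hw z hz] at h0
    have h1 : (w z + I) * eval z (g.map (algebraMap ℝ ℂ)) = 0 := by linear_combination h0
    have hwz : w z = -I := by linear_combination (mul_eq_zero.1 h1).resolve_right (hg z hz)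
    have him : 0 ≤ (w z).im := h z hz
    rw [hwz] at him
    norm_num at him
  · right; left
    intro z hz h0
    simp only [map_add, map_mul, eval_C, hw z hz] at h0
    have h1 : (w z - I) * eval z (g.map (algebraMap ℝ ℂ)) = 0 := by
      linear_combination (-I) * h0 + w z * eval z (g.map (algebraMap ℝ ℂ)) * I_sq
    have hwz : w z = I := by linear_combination (mul_eq_zero.1 h1).resolve_right (hg z hz)
    have him : (w z).im ≤ 0 := h z hz
    rw [hwz] at him
    norm_num at him

end

theorem stmt10_general {n : ℕ} (K : Set (Fin n → ℝ))
    (hKconv : Convex ℝ K)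
    (hKcone : ∀ (c : ℝ), 0 ≤ c → ∀ x ∈ K, c • x ∈ K)
    (f g : MvPolynomial (Fin n) ℝ) :
    (∀ lam mu : ℝ, KStable K ((lam • f + mu • g).map (algebraMap ℝ ℂ)) ∨
        lam • f + mu • g = 0) ↔
      (KStable K (f.map (algebraMap ℝ ℂ) + C Complex.I * g.map (algebraMap ℝ ℂ)) ∨
        KStable K (g.map (algebraMap ℝ ℂ) + C Complex.I * f.map (algebraMap ℝ ℂ)) ∨
        (f = 0 ∧ g = 0)) := by
  have hcone : ∀ c : ℝ, 0 < c → ∀ y ∈ interior K, c • y ∈ interior K :=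
    fun c hc y hy => smul_mem_interior_of_cone hKcone hc hy
  have hstable (p q : MvPolynomial (Fin n) ℝ)
      (hpq : KStable K (p.map (algebraMap ℝ ℂ) + C Complex.I * q.map (algebraMap ℝ ℂ)))
      (lam mu : ℝ) :=
    eval_smul_add_smul_ne_zero_on_tubeDomain_or_eq_zero isOpen_interior hKconv.interior hcone hpq
      lam mu
  refine ⟨eval_add_I_mul_ne_zero_on_or_of_pencil (convex_tubeDomain hKconv.interior).isPreconnected,
    ?_⟩
  rintro (hfg | hgf | ⟨rfl, rfl⟩) lam mu
  · exact hstable f g hfg lam mu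
  · rw [add_comm (lam • f)]
    exact hstable g f hgf mu lam
  · simp

/-- Conic Hermite–Kakeya–Obreschkoff theorem: `λ f + μ g` is `K`-stable or zero for all
real `λ, μ` iff `f + i g` or `g + i f` is `K`-stable, or `f ≡ g ≡ 0`. -/
theorem stmt10 {n : ℕ} (K : Set (Fin n → ℝ))
    (hKcl : IsClosed K) (hKconv : Convex ℝ K)
    (hKcone : ∀ (c : ℝ), 0 ≤ c → ∀ x ∈ K, c • x ∈ K)
    (hKpointed : K ∩ (-K) ⊆ {0}) (hKfull : (interior K).Nonempty)
    (f g : MvPolynomial (Fin n) ℝ) :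
    (∀ lam mu : ℝ, KStable K ((lam • f + mu • g).map (algebraMap ℝ ℂ)) ∨
        lam • f + mu • g = 0) ↔
      (KStable K (f.map (algebraMap ℝ ℂ) + C Complex.I * g.map (algebraMap ℝ ℂ)) ∨
        KStable K (g.map (algebraMap ℝ ℂ) + C Complex.I * f.map (algebraMap ℝ ℂ)) ∨
        (f = 0 ∧ g = 0)) :=
  stmt10_general K hKconv hKcone f g
end

section
/- (Khatri–Rao product positivity) Let A = (A_{ij}) and B = (B_{ij}) be Hermitian block matrices with the same n₁×n₁ block structure (blocks of size p×p and q×q respectively). If A and B are positive semidefinite, then the Khatri–Rao product A∗B = (A_{ij} ⊗ B_{ij}) is positive semidefinite. If A is positive semidefinite with positive definite diagonal blocks and B is positive definite, then A∗B is positive definite. -/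
open scoped ComplexOrder

/-- The Khatri–Rao product of block matrices `A = (A_{ij})` (blocks `p × p`) and
`B = (B_{ij})` (blocks `q × q`) with the same `n × n` block structure: its `(i,j)` block
is the Kronecker product `A_{ij} ⊗ B_{ij}`. -/
def khatriRao {n p q : ℕ} (A : Matrix (Fin n × Fin p) (Fin n × Fin p) ℂ)
    (B : Matrix (Fin n × Fin q) (Fin n × Fin q) ℂ) :
    Matrix (Fin n × (Fin p × Fin q)) (Fin n × (Fin p × Fin q)) ℂ :=
  Matrix.of fun x y => A (x.1, x.2.1) (y.1, y.2.1) * B (x.1, x.2.2) (y.1, y.2.2)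

/-!
`A ∗ B` is the principal submatrix of `A ⊗ B` on the indices `((i, a), (i, b))`, so it is
positive semidefinite with `A ⊗ B`. For definiteness, a vector `x` with `x* (A ∗ B) x = 0`
extends by zero to a null vector of the positive semidefinite `A ⊗ B`, hence to a vector in
its kernel. Since `A ⊗ B = (1 ⊗ B) (A ⊗ 1)` with `1 ⊗ B` invertible, it lies in the kernel of
`A ⊗ 1`, whose diagonal rows say `A_{ii} x(i, ·, b) = 0`; invertibility of `A_{ii}` gives `x = 0`.
-/

open Matrix
open scoped Kronecker

section KhatriRao

variable {n p q : ℕ} (A : Matrix (Fin n × Fin p) (Fin n × Fin p) ℂ)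
  (B : Matrix (Fin n × Fin q) (Fin n × Fin q) ℂ)

def khatriRaoIndex (x : Fin n × (Fin p × Fin q)) : (Fin n × Fin p) × (Fin n × Fin q) :=
  ((x.1, x.2.1), (x.1, x.2.2))

def extendDiag (x : Fin n × (Fin p × Fin q) → ℂ) : (Fin n × Fin p) × (Fin n × Fin q) → ℂ :=
  fun z => if z.1.1 = z.2.1 then x (z.1.1, z.1.2, z.2.2) else 0

theorem khatriRao_eq_submatrix_kronecker :
    khatriRao A B = (A ⊗ₖ B).submatrix khatriRaoIndex khatriRaoIndex :=
  rfl

theorem star_dotProduct_khatriRao_mulVec (x : Fin n × (Fin p × Fin q) → ℂ) :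
    star x ⬝ᵥ khatriRao A B *ᵥ x = star (extendDiag x) ⬝ᵥ (A ⊗ₖ B) *ᵥ extendDiag x := by
  simp [dotProduct, mulVec, extendDiag, khatriRao, Fintype.sum_prod_type, apply_ite, ite_mul,
    Finset.mul_sum]

theorem kronecker_one_mulVec_extendDiag_apply (x : Fin n × (Fin p × Fin q) → ℂ) (i : Fin n)
    (c : Fin p) (d : Fin q) :
    ((A ⊗ₖ (1 : Matrix (Fin n × Fin q) (Fin n × Fin q) ℂ)) *ᵥ extendDiag x) ((i, c), (i, d)) =
      (A.submatrix (Prod.mk i) (Prod.mk i) *ᵥ fun a => x (i, a, d)) c := by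
  simp [dotProduct, mulVec, extendDiag, Fintype.sum_prod_type, one_apply, apply_ite, ite_mul,
    ite_and, Finset.sum_ite_irrel]

variable {A B}

theorem submatrix_mulVec_eq_zero_of_kronecker_mulVec_extendDiag_eq_zero (hB : IsUnit B)
    {x : Fin n × (Fin p × Fin q) → ℂ} (hx : (A ⊗ₖ B) *ᵥ extendDiag x = 0) (i : Fin n)
    (d : Fin q) :
    A.submatrix (Prod.mk i) (Prod.mk i) *ᵥ (fun a => x (i, a, d)) = 0 := by
  have hfactor : A ⊗ₖ B = (1 ⊗ₖ B) * (A ⊗ₖ (1 : Matrix (Fin n × Fin q) _ ℂ)) := by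
    rw [← mul_kronecker_mul, Matrix.one_mul, Matrix.mul_one]
  rw [hfactor, ← mulVec_mulVec] at hx
  have hkernel := mulVec_injective_iff_isUnit.mpr (isUnit_one.kronecker hB)
    (hx.trans (mulVec_zero _).symm)
  ext c
  simpa [kronecker_one_mulVec_extendDiag_apply] using congrFun hkernel ((i, c), (i, d))

theorem Matrix.PosSemidef.khatriRao (hA : A.PosSemidef) (hB : B.PosSemidef) :
    (khatriRao A B).PosSemidef := by
  rw [khatriRao_eq_submatrix_kronecker]
  exact (hA.kronecker hB).submatrix _

theorem Matrix.PosDef.khatriRao (hA : A.PosSemidef)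
    (hdiag : ∀ i, (A.submatrix (Prod.mk i) (Prod.mk i)).PosDef) (hB : B.PosDef) :
    (khatriRao A B).PosDef := by
  have hAB := hA.khatriRao hB.posSemidef
  refine .of_dotProduct_mulVec_pos hAB.isHermitian fun x hx => ?_
  refine (hAB.dotProduct_mulVec_nonneg x).lt_of_ne' fun hzero => hx ?_
  rw [star_dotProduct_khatriRao_mulVec,
    (hA.kronecker hB.posSemidef).dotProduct_mulVec_zero_iff] at hzero
  ext ⟨i, a, d⟩
  have hblock :=
    submatrix_mulVec_eq_zero_of_kronecker_mulVec_extendDiag_eq_zero hB.isUnit hzero i d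
  exact congrFun (mulVec_injective_iff_isUnit.mpr (hdiag i).isUnit
    (hblock.trans (mulVec_zero _).symm)) a

end KhatriRao

/-- Khatri–Rao product positivity: if `A` and `B` are psd then `A ∗ B` is psd; if `A` is
psd with positive definite diagonal blocks and `B` is positive definite, then `A ∗ B` is
positive definite. -/
theorem stmt15 {n p q : ℕ} (A : Matrix (Fin n × Fin p) (Fin n × Fin p) ℂ)
    (B : Matrix (Fin n × Fin q) (Fin n × Fin q) ℂ) :
    (A.PosSemidef → B.PosSemidef → (khatriRao A B).PosSemidef) ∧
      (A.PosSemidef →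
        (∀ i : Fin n, (Matrix.of fun a b => A (i, a) (i, b) :
            Matrix (Fin p) (Fin p) ℂ).PosDef) →
        B.PosDef → (khatriRao A B).PosDef) :=
  ⟨fun hA hB => hA.khatriRao hB, fun hA hdiag hB => PosDef.khatriRao hA hdiag hB⟩
end

section
/- Let A = (A_{ij})_{n×n} be a positive semidefinite Hermitian block matrix with blocks of size d×d, and B a Hermitian d×d matrix. Then the polynomial f(Z) = det(Σ_{i,j=1}^n A_{ij} z_{ij} + B) in the entries of a symmetric n×n matrix variable Z = (z_{ij}) is psd-stable or identically zero. -/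
/-!
If the determinant vanishes at some symmetric `Z` with `Im Z ≻ 0`, pick `v ≠ 0` in the kernel and
let `W = I ⊗ v`, so that `S = Wᴴ A W` is the psd Gram matrix with entries `v* A_ij v`. Then
`0 = v* (Σ z_ij A_ij + B) v = Σ z_ij S_ij + v* B v`; since `Z` is symmetric and `S`, `B` are
Hermitian, the imaginary part of this is `tr (Im Z · Re S)`. With `Im Z ≻ 0` and `Re S ⪰ 0` this
forces `Re S = 0`, hence `S = 0`, hence `A W = 0`: every block `A_ij` kills `v`. Then `B v = 0`
as well, and `v` lies in the kernel of `Σ z_ij A_ij + B` for every `Z`.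
-/

open scoped ComplexOrder

/-- The `(i,j)` block (of size `d × d`) of a block matrix indexed by `Fin n × Fin d`. -/
def block {n d : ℕ} (A : Matrix (Fin n × Fin d) (Fin n × Fin d) ℂ) (i j : Fin n) :
    Matrix (Fin d) (Fin d) ℂ :=
  Matrix.of fun a b => A (i, a) (j, b)

namespace Matrix

variable {n : Type*} [Fintype n]

lemma PosDef.eq_zero_of_trace_mul_eq_zero {𝕜 : Type*} [RCLike 𝕜] [DecidableEq n]
    {Y S : Matrix n n 𝕜} (hY : Y.PosDef) (hS : S.PosSemidef) (h : (Y * S).trace = 0) : S = 0 := by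
  open MatrixOrder in
  obtain ⟨C, hC, rfl⟩ :=
    CStarAlgebra.isStrictlyPositive_iff_eq_star_mul_self.mp hY.isStrictlyPositive
  rw [star_eq_conjTranspose, Matrix.mul_assoc, trace_mul_comm,
    (hS.mul_mul_conjTranspose_same C).trace_eq_zero_iff] at h
  rwa [← star_eq_conjTranspose, hC.star.mul_left_eq_zero, hC.mul_right_eq_zero] at h

lemma PosSemidef.mul_eq_zero_of_conjTranspose_mul_mul_eq_zero {𝕜 : Type*} [RCLike 𝕜]
    [DecidableEq n] {m : Type*} {A : Matrix n n 𝕜} (hA : A.PosSemidef) {W : Matrix n m 𝕜}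
    (h : Wᴴ * A * W = 0) : A * W = 0 := by
  open MatrixOrder in
  obtain ⟨C, rfl⟩ := CStarAlgebra.nonneg_iff_eq_star_mul_self.mp hA.nonneg
  rw [star_eq_conjTranspose] at h ⊢
  rw [conjTranspose_mul_self_mul_eq_zero, ← conjTranspose_mul_self_eq_zero, conjTranspose_mul,
    ← h]
  simp only [Matrix.mul_assoc]

lemma PosSemidef.map_re {S : Matrix n n ℂ} (hS : S.PosSemidef) :
    (S.map Complex.re).PosSemidef := by
  rw [posSemidef_iff_dotProduct_mulVec]
  refine ⟨?_, fun x => ?_⟩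
  · ext i j
    simp [← hS.1.apply i j]
  · have hx := hS.dotProduct_mulVec_nonneg (fun i => (x i : ℂ))
    have hre : star x ⬝ᵥ S.map Complex.re *ᵥ x
        = (star (fun i => (x i : ℂ)) ⬝ᵥ S *ᵥ fun i => (x i : ℂ)).re := by
      simp [dotProduct, mulVec, Complex.re_sum, Finset.mul_sum]
    rw [hre]
    exact (Complex.le_def.mp hx).1

lemma PosSemidef.eq_zero_of_map_re_eq_zero {S : Matrix n n ℂ} (hS : S.PosSemidef)
    (h : S.map Complex.re = 0) : S = 0 := by
  refine hS.trace_eq_zero_iff.mp (Complex.ext ?_ ?_)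
  · simpa [trace, Complex.re_sum] using congrArg trace h
  · exact (Complex.le_def.mp hS.trace_nonneg).2.symm

lemma IsSymm.im_sum_mul_of_isHermitian {Z S : Matrix n n ℂ} (hZ : Z.IsSymm)
    (hS : S.IsHermitian) :
    (∑ i, ∑ j, Z i j * S i j).im = (Z.map Complex.im * S.map Complex.re).trace := by
  have hanti : ∑ i, ∑ j, (Z i j).re * (S i j).im = 0 := by
    have hswap : ∑ i, ∑ j, (Z i j).re * (S i j).im = - ∑ i, ∑ j, (Z i j).re * (S i j).im := by
      conv_lhs => rw [Finset.sum_comm]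
      simp only [← Finset.sum_neg_distrib]
      refine Finset.sum_congr rfl fun i _ => Finset.sum_congr rfl fun j _ => ?_
      rw [hZ.apply, ← hS.apply, Complex.star_def, Complex.conj_im, mul_neg]
    linarith
  simp only [Complex.im_sum, Complex.mul_im, Finset.sum_add_distrib, hanti, zero_add, trace,
    diag, mul_apply, map_apply]
  refine Finset.sum_congr rfl fun i _ => Finset.sum_congr rfl fun j _ => ?_
  rw [← hS.apply, Complex.star_def, Complex.conj_re, mul_comm]

end Matrix

open Matrix

def blockDiagonalCol {κ R : Type*} (ι : Type*) [DecidableEq ι] [Zero R] (v : κ → R) :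
    Matrix (ι × κ) ι R :=
  of fun p i => if p.1 = i then v p.2 else 0

section blocks

variable {n d : ℕ} (A : Matrix (Fin n × Fin d) (Fin n × Fin d) ℂ) (v : Fin d → ℂ)

lemma mul_blockDiagonalCol_apply (i j : Fin n) (a : Fin d) :
    (A * blockDiagonalCol (Fin n) v) (i, a) j = (block A i j *ᵥ v) a := by
  simp [mul_apply, mulVec, dotProduct, blockDiagonalCol, block, Fintype.sum_prod_type]

lemma conjTranspose_blockDiagonalCol_mul_mul_apply (i j : Fin n) :
    ((blockDiagonalCol (Fin n) v)ᴴ * A * blockDiagonalCol (Fin n) v) i j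
      = star v ⬝ᵥ block A i j *ᵥ v := by
  rw [Matrix.mul_assoc, mul_apply, Fintype.sum_prod_type]
  simp_rw [mul_blockDiagonalCol_apply]
  simp [blockDiagonalCol, dotProduct, apply_ite, ite_mul]

lemma block_mulVec_eq_zero_of_mulVec_eq_zero (hA : A.PosSemidef) {B : Matrix (Fin d) (Fin d) ℂ}
    (hB : B.IsHermitian) {Z : Matrix (Fin n) (Fin n) ℂ} (hZ : Z.IsSymm)
    (hY : (Z.map Complex.im).PosDef) (hv : (∑ i, ∑ j, Z i j • block A i j + B) *ᵥ v = 0)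
    (i j : Fin n) : block A i j *ᵥ v = 0 := by
  set W := blockDiagonalCol (Fin n) v
  have hS : (Wᴴ * A * W).PosSemidef := hA.conjTranspose_mul_mul_same W
  have hquad : ∑ i, ∑ j, Z i j * (Wᴴ * A * W) i j + star v ⬝ᵥ B *ᵥ v = 0 := by
    simp only [W, conjTranspose_blockDiagonalCol_mul_mul_apply]
    simpa only [add_mulVec, dotProduct_add, sum_mulVec, smul_mulVec, dotProduct_sum,
      dotProduct_smul, smul_eq_mul, dotProduct_zero] using congrArg (star v ⬝ᵥ ·) hv
  have htrace : (Z.map Complex.im * (Wᴴ * A * W).map Complex.re).trace = 0 := by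
    have hBv : (star v ⬝ᵥ B *ᵥ v).im = 0 := hB.im_star_dotProduct_mulVec_self v
    simpa [hZ.im_sum_mul_of_isHermitian hS.isHermitian, hBv] using congrArg Complex.im hquad
  have hAW : A * W = 0 :=
    hA.mul_eq_zero_of_conjTranspose_mul_mul_eq_zero <| hS.eq_zero_of_map_re_eq_zero <|
      hY.eq_zero_of_trace_mul_eq_zero hS.map_re htrace
  ext a
  rw [← mul_blockDiagonalCol_apply, hAW, Matrix.zero_apply, Pi.zero_apply]

end blocks

/-- If `A = (A_{ij})` is a psd Hermitian block matrix and `B` is Hermitian, then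
`f(Z) = det(Σ A_{ij} z_{ij} + B)` on symmetric matrix variables `Z` is psd-stable or
identically zero. -/
theorem stmt16 {n d : ℕ} (A : Matrix (Fin n × Fin d) (Fin n × Fin d) ℂ)
    (hA : A.PosSemidef) (B : Matrix (Fin d) (Fin d) ℂ) (hB : B.IsHermitian) :
    (∀ Z : Matrix (Fin n) (Fin n) ℂ, Z.IsSymm →
        (Matrix.of fun i j => (Z i j).im : Matrix (Fin n) (Fin n) ℝ).PosDef →
        (∑ i, ∑ j, Z i j • block A i j + B).det ≠ 0) ∨
      (∀ Z : Matrix (Fin n) (Fin n) ℂ, Z.IsSymm →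
        (∑ i, ∑ j, Z i j • block A i j + B).det = 0) := by
  refine or_iff_not_imp_left.mpr fun hstable => ?_
  push Not at hstable
  obtain ⟨Z, hZ, hY, hdet⟩ := hstable
  obtain ⟨v, hv, hZv⟩ := exists_mulVec_eq_zero_iff.mpr hdet
  have hblock := block_mulVec_eq_zero_of_mulVec_eq_zero A v hA hB hZ hY hZv
  have hsum : ∀ Z' : Matrix (Fin n) (Fin n) ℂ, (∑ i, ∑ j, Z' i j • block A i j) *ᵥ v = 0 := by
    intro Z'
    simp [sum_mulVec, smul_mulVec, hblock]
  have hBv : B *ᵥ v = 0 := by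
    rwa [add_mulVec, hsum, zero_add] at hZv
  intro Z' _
  exact exists_mulVec_eq_zero_iff.mp ⟨v, hv, by rw [add_mulVec, hsum, hBv, add_zero]⟩
end
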